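/- arXiv:2408.00642 — 3 statements merged into one kernel-verified Lean document; each statement's English description precedes it below -/
import Mathlib

section
/- Let c ≥ 1 and a ∈ [0,1] be real numbers. Let g, h : ℝ → ℝ be functions that are nonnegative on [0,1] and integrable on [0,1], and let L : [0,1] → ℝ be nonnegative. Suppose: (i) L(1−p) ≤ 2·h(p) for all p ∈ [0,1]; (ii) for every natural number j ≥ 1 and every p ∈ [0,1], if L(1−p) ≤ 2^j then g(p) ≤ c·(2^{j+1} − 2); (iii) g(p) ≤ 2c for every p ∈ [0,1] with 1 − p ≤ a; (iv) L(q) > 2 for every q ∈ (a,1]. Then ∫₀¹ g(p) dp ≤ 8c·∫₀¹ h(p) dp + 2c. -/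
open MeasureTheory

theorem quota_integral_bound
    (c a : ℝ) (hc : 1 ≤ c) (ha : a ∈ Set.Icc (0 : ℝ) 1)
    (g h L : ℝ → ℝ)
    (hg0 : ∀ p ∈ Set.Icc (0 : ℝ) 1, 0 ≤ g p)
    (hh0 : ∀ p ∈ Set.Icc (0 : ℝ) 1, 0 ≤ h p)
    (hgI : IntervalIntegrable g volume 0 1)
    (hhI : IntervalIntegrable h volume 0 1)
    (hL0 : ∀ q ∈ Set.Icc (0 : ℝ) 1, 0 ≤ L q)
    (hi : ∀ p ∈ Set.Icc (0 : ℝ) 1, L (1 - p) ≤ 2 * h p)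
    (hii : ∀ j : ℕ, 1 ≤ j → ∀ p ∈ Set.Icc (0 : ℝ) 1,
      L (1 - p) ≤ 2 ^ j → g p ≤ c * (2 ^ (j + 1) - 2))
    (hiii : ∀ p ∈ Set.Icc (0 : ℝ) 1, 1 - p ≤ a → g p ≤ 2 * c)
    (hiv : ∀ q ∈ Set.Ioc a 1, L q > 2) :
    ∫ p in (0 : ℝ)..1, g p ≤ 8 * c * ∫ p in (0 : ℝ)..1, h p + 2 * c := by
  have hc0 : (0 : ℝ) ≤ c := le_trans zero_le_one hc
  have key : ∀ p ∈ Set.Icc (0 : ℝ) 1, g p ≤ 8 * c * h p + 2 * c := by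
    intro p hp
    by_cases hpa : 1 - p ≤ a
    · have := hiii p hp hpa
      have hhp := hh0 p hp
      nlinarith
    · push_neg at hpa
      have hq : 1 - p ∈ Set.Ioc a 1 := ⟨hpa, by linarith [hp.1]⟩
      have hL2 : L (1 - p) > 2 := hiv _ hq
      have hLh : L (1 - p) ≤ 2 * h p := hi p hp
      -- find minimal j with L(1-p) ≤ 2^j
      have hex : ∃ j : ℕ, L (1 - p) ≤ 2 ^ j := by
        obtain ⟨n, hn⟩ := pow_unbounded_of_one_lt (L (1 - p)) (by norm_num : (1:ℝ) < 2)
        exact ⟨n, hn.le⟩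
      classical
      set j := Nat.find hex with hj
      have hjle : L (1 - p) ≤ 2 ^ j := Nat.find_spec hex
      have hj2 : 2 ≤ j := by
        have h1 : 1 < Nat.find hex := (Nat.lt_find_iff hex 1).2 (fun m hm hle => by
          have hm2 : (2:ℝ) ^ m ≤ 2 := by interval_cases m <;> norm_num
          linarith)
        omega
      have hmin : ¬ L (1 - p) ≤ 2 ^ (j - 1) := Nat.find_min hex (by omega)
      push_neg at hmin
      have h2j : (2 : ℝ) ^ j < 4 * h p := by
        have : (2:ℝ) ^ j = 2 * 2 ^ (j - 1) := by
          rw [← pow_succ']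
          congr 1
          omega
        rw [this]
        linarith
      have hgp : g p ≤ c * (2 ^ (j + 1) - 2) := hii j (by omega) p hp hjle
      have : c * (2 ^ (j + 1) - 2) ≤ 8 * c * h p := by
        have h1 : (2:ℝ) ^ (j + 1) = 2 * 2 ^ j := by rw [pow_succ]; ring
        nlinarith
      linarith
  have hint : IntervalIntegrable (fun p => 8 * c * h p + 2 * c) volume 0 1 :=
    ((hhI.const_mul (8 * c)).add (intervalIntegrable_const))
  have := intervalIntegral.integral_mono_on (by norm_num : (0:ℝ) ≤ 1) hgI hint
    (fun p hp => key p hp)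
  have heq : (∫ p in (0:ℝ)..1, (8 * c * h p + 2 * c))
      = 8 * c * (∫ p in (0:ℝ)..1, h p) + 2 * c := by
    rw [intervalIntegral.integral_add (hhI.const_mul (8*c)) intervalIntegrable_const,
      intervalIntegral.integral_const_mul, intervalIntegral.integral_const]
    simp
  have heq2 : (∫ p in (0:ℝ)..1, (h p + 2 * c))
      = (∫ p in (0:ℝ)..1, h p) + 2 * c := by
    rw [intervalIntegral.integral_add hhI intervalIntegrable_const,
      intervalIntegral.integral_const]
    simp
  show ∫ p in (0:ℝ)..1, g p ≤ 8 * c * ∫ p in (0:ℝ)..1, (h p + 2 * c)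
  rw [heq2]
  nlinarith [this, heq]
end

section
/- Let c, ℓ, u, v be real numbers with c ≥ 0, u ≥ 0, v ≥ 0, ℓ > 2, and ℓ ≤ 2u. Suppose that for every natural number j ≥ 1, if ℓ ≤ 2^j then v ≤ c·(2^{j+1} − 2). Then v ≤ 8c·u. -/
theorem pointwise_latency_bound
    (c ℓ u v : ℝ) (hc : 0 ≤ c) (hu : 0 ≤ u) (hv : 0 ≤ v)
    (hℓ : 2 < ℓ) (hℓu : ℓ ≤ 2 * u)
    (hj : ∀ j : ℕ, 1 ≤ j → ℓ ≤ 2 ^ j → v ≤ c * (2 ^ (j + 1) - 2)) :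
    v ≤ 8 * c * u := by
  have hex : ∃ j : ℕ, ℓ ≤ 2 ^ j := by
    obtain ⟨j, hjj⟩ := pow_unbounded_of_one_lt ℓ (by norm_num : (1:ℝ) < 2)
    exact ⟨j, hjj.le⟩
  classical
  set j := Nat.find hex with hjdef
  have hjspec : ℓ ≤ 2 ^ j := Nat.find_spec hex
  have hj2 : 2 ≤ j := by
    by_contra h
    push_neg at h
    have h2 : (2:ℝ) ^ j ≤ 2 := by
      interval_cases j <;> norm_num
    linarith
  have hmin : ¬ ℓ ≤ 2 ^ (j - 1) := Nat.find_min hex (by omega)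
  push_neg at hmin
  have h2j : (2:ℝ) ^ j < 2 * ℓ := by
    have : (2:ℝ) ^ j = 2 * 2 ^ (j - 1) := by
      rw [← pow_succ']
      congr 1
      omega
    rw [this]
    linarith
  have hvb : v ≤ c * (2 ^ (j + 1) - 2) := hj j (by omega) hjspec
  have : c * (2 ^ (j + 1) - 2) ≤ c * (2 * 2 ^ j) := by
    apply mul_le_mul_of_nonneg_left _ hc
    rw [pow_succ]
    ring_nf
    linarith [pow_pos (by norm_num : (0:ℝ) < 2) j]
  have h2ju : (2:ℝ) * 2 ^ j ≤ 8 * u := by nlinarith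
  nlinarith
end

section
/- There exists a constant K > 0 with the following property. Call a tour a finite list of points p₀, p₁, …, p_m in ℝ² with p_m = p₀; its length is Σ_{i<m} ‖p_{i+1} − p_i‖, its trace is the union of the closed segments [p_i, p_{i+1}] (the singleton {p₀} if m = 0), and its coverage is the Minkowski sum of its trace with the square [−1/2, 1/2]². Then for every tour p of length at least 1 there exists a tour q whose first point is p₀, all of whose points lie in the shifted integer lattice p₀ + ℤ², whose coverage contains the coverage of p, and whose length is at most K times the length of p. -/
open Pointwise

/-- The length of a tour `p 0, p 1, …, p m`. -/
noncomputable def tourLength (m : ℕ) (p : ℕ → EuclideanSpace ℝ (Fin 2)) : ℝ :=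
  ∑ i ∈ Finset.range m, ‖p (i + 1) - p i‖

/-- The trace of a tour: the union of the closed segments joining consecutive
points (the singleton `{p 0}` if `m = 0`). -/
def tourTrace (m : ℕ) (p : ℕ → EuclideanSpace ℝ (Fin 2)) :
    Set (EuclideanSpace ℝ (Fin 2)) :=
  {p 0} ∪ ⋃ i ∈ Finset.range m, segment ℝ (p i) (p (i + 1))

/-- The square `[-1/2, 1/2]²`, the operational area of the cutter. -/
def unitSquare : Set (EuclideanSpace ℝ (Fin 2)) :=
  {x | ∀ j : Fin 2, x j ∈ Set.Icc (-(1 / 2) : ℝ) (1 / 2)}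

/-- The coverage of a tour: the Minkowski sum of its trace with the square
`[-1/2, 1/2]²`. -/
def squareCoverage (m : ℕ) (p : ℕ → EuclideanSpace ℝ (Fin 2)) :
    Set (EuclideanSpace ℝ (Fin 2)) :=
  tourTrace m p + unitSquare

/-!
Refine the tour, of length `L`, into pieces of length at most `1` and walk along the refinement points, keeping
a current grid point which is replaced by a grid point nearest to the walker only when the walker
gets more than `2` away from it. Each replacement is paid for by a unit of walked length, so
these grid points form a chain of at most `L + 2` points, consecutive ones at distance at most
`4`, with every point of the tour within `3` of one of them. Sweeping, around each of them in
turn, all grid points within distance `5` gives a grid tour of length `O(L)` that passes through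
every pixel centre within distance `2` of the tour; the pixels around these centres contain the
coverage.
-/

local notation "ℝ²" => EuclideanSpace ℝ (Fin 2)

open Finset Set

namespace List
variable {α : Type*} {l : List α} {B : α → List α} {a : α}

theorem IsChain.flatMap_of_head?_of_getLast? {R : α → α → Prop} (hl : l.IsChain R)
    (hB : ∀ a, (B a).IsChain R) (hhead : ∀ a, (B a).head? = some a)
    (hlast : ∀ a, (B a).getLast? = some a) : (l.flatMap B).IsChain R := by
  rw [flatMap_def, isChain_flatten]
  · refine ⟨by simpa using fun a _ => hB a, isChain_map_of_isChain _ ?_ hl⟩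
    intro a b hab x hx y hy
    simp_all
  · simp only [mem_map, not_exists, not_and]
    intro a _ h
    simpa [h] using hhead a

theorem head?_flatMap_of_head? (hl : l.head? = some a) (hB : ∀ a, (B a).head? = some a) :
    (l.flatMap B).head? = some a := by
  obtain ⟨l', rfl⟩ : ∃ l', l = a :: l' := by cases l <;> simp_all
  simp [head?_append, hB]

theorem getLast?_flatMap_of_getLast? (hl : l.getLast? = some a)
    (hB : ∀ a, (B a).getLast? = some a) : (l.flatMap B).getLast? = some a := by
  obtain ⟨l', rfl⟩ := getLast?_eq_some_iff.mp hl
  simp [getLast?_append, hB]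

theorem getD_length_sub_one_eq_getD_zero (d : α) (hhead : l.head? = some a)
    (hlast : l.getLast? = some a) : l.getD (l.length - 1) d = l.getD 0 d := by
  rw [getD_eq_getElem?_getD, getD_eq_getElem?_getD, ← getLast?_eq_getElem?, ← head?_eq_getElem?,
    hhead, hlast]

end List

section Subdivision
variable {V : Type*} [NormedAddCommGroup V] [NormedSpace ℝ V]

open AffineMap

noncomputable def subdivide (p : ℕ → V) (T j : ℕ) : V :=
  lineMap (p (j / T)) (p (j / T + 1)) ((j % T : ℕ) / T : ℝ)

variable (p : ℕ → V) {T : ℕ}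

theorem subdivide_mul_add (hT : 0 < T) (i : ℕ) {k : ℕ} (hk : k ≤ T) :
    subdivide p T (T * i + k) = lineMap (p i) (p (i + 1)) (k / T : ℝ) := by
  rcases hk.lt_or_eq with hk | rfl
  · simp [subdivide, Nat.mul_add_div hT, Nat.div_eq_of_lt hk, Nat.mod_eq_of_lt hk]
  · simp [subdivide, ← Nat.mul_succ, hT.ne']

theorem subdivide_mul (hT : 0 < T) (i : ℕ) : subdivide p T (T * i) = p i := by
  simpa using subdivide_mul_add p hT i (Nat.zero_le T)

theorem dist_subdivide_succ (hT : 0 < T) (j : ℕ) :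
    dist (subdivide p T (j + 1)) (subdivide p T j) = dist (p (j / T + 1)) (p (j / T)) / T := by
  have h := subdivide_mul_add p hT (j / T) (Nat.mod_lt j hT)
  have h' := subdivide_mul_add p hT (j / T) (Nat.mod_lt j hT).le
  rw [Nat.succ_eq_add_one, ← add_assoc, Nat.div_add_mod] at h
  rw [Nat.div_add_mod] at h'
  rw [h, h', dist_lineMap_lineMap, dist_comm (p _), Real.dist_eq, ← sub_div, Nat.cast_succ,
    add_sub_cancel_left, abs_of_pos (by positivity), one_div_mul_eq_div]

theorem dist_subdivide_succ_le {m j : ℕ} (hT : 0 < T) (hj : j < T * m) :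
    dist (subdivide p T (j + 1)) (subdivide p T j) ≤
      (∑ i ∈ range m, dist (p (i + 1)) (p i)) / T := by
  rw [dist_subdivide_succ p hT]
  gcongr
  exact single_le_sum (f := fun i => dist (p (i + 1)) (p i)) (fun _ _ => dist_nonneg)
    (Finset.mem_range.mpr ((Nat.div_lt_iff_lt_mul hT).mpr (by linarith)))

theorem sum_dist_subdivide (hT : 0 < T) (m : ℕ) :
    ∑ j ∈ range (T * m), dist (subdivide p T (j + 1)) (subdivide p T j) =
      ∑ i ∈ range m, dist (p (i + 1)) (p i) := by
  induction m with
  | zero => simp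
  | succ m ih =>
    have hk : ∀ k ∈ range T, (T * m + k) / T = m := fun k hk => by
      rw [Nat.mul_add_div hT, Nat.div_eq_of_lt (Finset.mem_range.mp hk), add_zero]
    rw [Nat.mul_succ, sum_range_add, ih, sum_range_succ]
    congr 1
    rw [sum_congr rfl fun k hk' => by rw [dist_subdivide_succ p hT, hk k hk'], sum_const,
      card_range, nsmul_eq_mul, mul_div_cancel₀ _ (by positivity)]

theorem segment_subset_iUnion_subdivide (hT : 0 < T) (i : ℕ) :
    segment ℝ (p i) (p (i + 1)) ⊆
      ⋃ k ∈ range T, segment ℝ (subdivide p T (T * i + k)) (subdivide p T (T * i + k + 1)) := by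
  rw [segment_eq_image_lineMap]
  rintro _ ⟨t, ⟨ht0, ht1⟩, rfl⟩
  have hT' : (0 : ℝ) < T := by exact_mod_cast hT
  obtain ⟨k, hkT, hk, hk'⟩ : ∃ k < T, (k : ℝ) ≤ t * T ∧ t * T ≤ k + 1 := by
    by_cases h : t * T < T
    · exact ⟨⌊t * T⌋₊, by exact_mod_cast (Nat.floor_lt (by positivity)).2 h,
        Nat.floor_le (by positivity), (Nat.lt_floor_add_one _).le⟩
    · refine ⟨T - 1, by omega, ?_, ?_⟩ <;> push_cast [Nat.cast_pred hT] <;> nlinarith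
  simp only [mem_iUnion, Finset.mem_range]
  refine ⟨k, hkT, ?_⟩
  rw [add_assoc, subdivide_mul_add p hT i hkT.le, subdivide_mul_add p hT i hkT, ← image_segment,
    segment_eq_Icc (by gcongr; linarith)]
  refine ⟨t, ⟨?_, ?_⟩, rfl⟩
  · rwa [div_le_iff₀ hT']
  · rwa [le_div_iff₀ hT', Nat.cast_succ]

end Subdivision

/-- Hysteresis: the current net point (the head of the list, which is built backwards) is replaced
only when the path gets more than `ρ + 1` away from it. The new point is within `ρ` of the path,
so the path travels at least `1` between two replacements; the last conjunct is the potential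
recording this. -/
theorem exists_isChain_net_along {X : Type*} [PseudoMetricSpace X] {Λ : Set X} {ρ δ : ℝ}
    (hΛ : ∀ x, ∃ c ∈ Λ, dist x c ≤ ρ) (f : ℕ → X) (hf0 : f 0 ∈ Λ) (N : ℕ)
    (hf : ∀ t < N, dist (f (t + 1)) (f t) ≤ δ) :
    ∃ c cs, (c :: cs).IsChain (fun a b => dist a b ≤ 2 * ρ + 1 + δ) ∧ (∀ x ∈ c :: cs, x ∈ Λ) ∧
      (c :: cs).getLast? = some (f 0) ∧ (∀ t ≤ N, ∃ x ∈ c :: cs, dist (f t) x ≤ ρ + 1) ∧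
      dist (f N) c ≤ ρ + 1 ∧
      cs.length + dist (f N) c ≤ ∑ t ∈ range N, dist (f (t + 1)) (f t) := by
  have hρ : 0 ≤ ρ := by
    obtain ⟨_, -, h⟩ := hΛ (f 0)
    exact dist_nonneg.trans h
  induction N with
  | zero =>
    refine ⟨f 0, [], by simp, by simpa using hf0, rfl, fun t ht => ⟨f 0, by simp, ?_⟩, ?_, ?_⟩
    · rw [Nat.le_zero.mp ht, dist_self]; linarith
    · rw [dist_self]; linarith
    · simp
  | succ N ih =>
    obtain ⟨c, cs, hchain, hΛcs, hlast, hcover, hc, hlen⟩ := ih fun t ht => hf t (by omega)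
    have hstep := hf N N.lt_succ_self
    have htri := dist_triangle (f (N + 1)) (f N) c
    rw [sum_range_succ]
    by_cases hnear : dist (f (N + 1)) c ≤ ρ + 1
    · refine ⟨c, cs, hchain, hΛcs, hlast, fun t ht => ?_, hnear, by linarith⟩
      rcases ht.lt_or_eq with ht | rfl
      · exact hcover t (Nat.lt_succ_iff.mp ht)
      · exact ⟨c, by simp, hnear⟩
    · obtain ⟨c', hc'Λ, hc'⟩ := hΛ (f (N + 1))
      refine ⟨c', c :: cs, ?_, ?_, by simpa using hlast, fun t ht => ?_, by linarith, ?_⟩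
      · refine hchain.cons fun y hy => ?_
        obtain rfl : c = y := Option.some_injective _ hy
        linarith [dist_triangle c' (f (N + 1)) c, dist_comm c' (f (N + 1))]
      · simpa [hc'Λ] using hΛcs
      · rcases ht.lt_or_eq with ht | rfl
        · obtain ⟨x, hx, hxt⟩ := hcover t (Nat.lt_succ_iff.mp ht)
          exact ⟨x, List.mem_cons_of_mem _ hx, hxt⟩
        · exact ⟨c', by simp, by linarith⟩
      · simp only [List.length_cons, Nat.cast_succ]
        linarith

theorem tourLength_eq_sum_dist (m : ℕ) (p : ℕ → ℝ²) :
    tourLength m p = ∑ i ∈ range m, dist (p (i + 1)) (p i) := by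
  simp only [tourLength, dist_eq_norm]

theorem tourLength_getD_le (l : List ℝ²) (d : ℝ²) {D : ℝ}
    (hl : l.IsChain fun a b => dist a b ≤ D) :
    tourLength (l.length - 1) (l.getD · d) ≤ (l.length - 1 : ℕ) * D := by
  rw [tourLength_eq_sum_dist]
  refine (sum_le_card_nsmul _ _ D fun i hi => ?_).trans_eq (by simp)
  have hi : i + 1 < l.length := by rw [Finset.mem_range] at hi; omega
  rw [List.getD_eq_getElem _ _ hi, List.getD_eq_getElem _ _ (by omega), dist_comm]
  exact List.isChain_iff_getElem.mp hl i hi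

theorem mem_tourTrace_getD {l : List ℝ²} (d : ℝ²) {x : ℝ²} (hx : x ∈ l) :
    x ∈ tourTrace (l.length - 1) (l.getD · d) := by
  obtain ⟨i, hi, rfl⟩ := List.mem_iff_getElem.mp hx
  rcases i with _ | i
  · left
    exact (List.getD_eq_getElem _ _ hi).symm
  · right
    simp only [mem_iUnion, Finset.mem_range]
    refine ⟨i, by omega, ?_⟩
    rw [List.getD_eq_getElem _ _ hi]
    exact right_mem_segment ..

theorem exists_dist_le_of_mem_tourTrace {N : ℕ} {f : ℕ → ℝ²} {δ : ℝ} (hδ : 0 ≤ δ)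
    (hf : ∀ t < N, dist (f (t + 1)) (f t) ≤ δ) {x : ℝ²} (hx : x ∈ tourTrace N f) :
    ∃ t ≤ N, dist x (f t) ≤ δ := by
  rcases hx with rfl | hx
  · exact ⟨0, N.zero_le, by rwa [dist_self]⟩
  · simp only [mem_iUnion, Finset.mem_range, segment_eq_image_lineMap] at hx
    obtain ⟨t, ht, s, ⟨hs0, hs1⟩, rfl⟩ := hx
    refine ⟨t, ht.le, ?_⟩
    rw [dist_lineMap_left, Real.norm_of_nonneg hs0, dist_comm]
    nlinarith [hf t ht, dist_nonneg (x := f t) (y := f (t + 1))]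

theorem exists_refinement_dist_le_one (m : ℕ) (p : ℕ → ℝ²) :
    ∃ (N : ℕ) (f : ℕ → ℝ²), f 0 = p 0 ∧ f N = p m ∧ (∀ t < N, dist (f (t + 1)) (f t) ≤ 1) ∧
      tourLength N f = tourLength m p ∧ tourTrace m p ⊆ tourTrace N f := by
  set T := ⌊tourLength m p⌋₊ + 1
  have hT : 0 < T := Nat.succ_pos _
  refine ⟨T * m, subdivide p T, by simpa using subdivide_mul p hT 0, subdivide_mul p hT m,
    fun t ht => ?_, by rw [tourLength_eq_sum_dist, tourLength_eq_sum_dist, sum_dist_subdivide p hT],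
    ?_⟩
  · refine (dist_subdivide_succ_le p hT ht).trans ?_
    rw [← tourLength_eq_sum_dist, div_le_one (by positivity)]
    exact (Nat.lt_floor_add_one _).le.trans (by simp [T])
  · rintro x (hx | hx)
    · left
      rwa [← subdivide_mul p hT 0, mul_zero] at hx
    · right
      simp only [mem_iUnion, Finset.mem_range] at hx ⊢
      obtain ⟨i, hi, hx⟩ := hx
      obtain ⟨k, hk, hx⟩ := mem_iUnion₂.mp (segment_subset_iUnion_subdivide p hT i hx)
      exact ⟨T * i + k, by rw [Finset.mem_range] at hk; nlinarith, hx⟩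

def gridPoints (p₀ : ℝ²) : Set ℝ² := {x | ∀ j, ∃ n : ℤ, x j = p₀ j + n}

theorem self_mem_gridPoints (p₀ : ℝ²) : p₀ ∈ gridPoints p₀ := fun _ => ⟨0, by simp⟩

theorem exists_mem_gridPoints_sub_mem_unitSquare (p₀ y : ℝ²) :
    ∃ n ∈ gridPoints p₀, y - n ∈ unitSquare := by
  refine ⟨WithLp.toLp 2 fun j => p₀ j + round (y j - p₀ j), fun j => ⟨_, rfl⟩, fun j => ?_⟩
  have := abs_sub_round (y j - p₀ j)
  rw [abs_le] at this
  simp only [PiLp.sub_apply, Set.mem_Icc]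
  constructor <;> linarith

theorem norm_le_one_of_mem_unitSquare {u : ℝ²} (hu : u ∈ unitSquare) : ‖u‖ ≤ 1 := by
  have h0 := hu 0
  have h1 := hu 1
  simp only [Set.mem_Icc] at h0 h1
  rw [EuclideanSpace.norm_eq, Fin.sum_univ_two, Real.sqrt_le_one]
  simp only [Real.norm_eq_abs, sq_abs]
  nlinarith

theorem exists_mem_gridPoints_dist_le_one (p₀ y : ℝ²) : ∃ n ∈ gridPoints p₀, dist y n ≤ 1 := by
  obtain ⟨n, hn, hyn⟩ := exists_mem_gridPoints_sub_mem_unitSquare p₀ y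
  exact ⟨n, hn, by rw [dist_eq_norm]; exact norm_le_one_of_mem_unitSquare hyn⟩

theorem squareCoverage_subset_of_forall_gridPoints {m m' : ℕ} {p q : ℕ → ℝ²} (p₀ : ℝ²)
    (h : ∀ x ∈ tourTrace m p, ∀ n ∈ gridPoints p₀, dist x n ≤ 2 → n ∈ tourTrace m' q) :
    squareCoverage m p ⊆ squareCoverage m' q := by
  rintro _ ⟨x, hx, u, hu, rfl⟩
  obtain ⟨n, hn, hyn⟩ := exists_mem_gridPoints_sub_mem_unitSquare p₀ (x + u)
  refine ⟨n, h x hx n hn ?_, _, hyn, add_sub_cancel _ _⟩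
  calc dist x n ≤ dist x (x + u) + dist (x + u) n := dist_triangle _ _ _
    _ ≤ 1 + 1 := by
      rw [dist_comm, dist_eq_norm, dist_eq_norm, add_sub_cancel_left]
      gcongr <;> exact norm_le_one_of_mem_unitSquare ‹_›
    _ = 2 := by norm_num

/-- `c` is put at both ends so that the blocks around the points of a chain concatenate into a
chain. -/
noncomputable def gridBlock (r : ℕ) (c : ℝ²) : List ℝ² :=
  c :: (Finset.Icc (-r : ℤ) r ×ˢ Finset.Icc (-r : ℤ) r).toList.map
    (fun z => c + !₂[(z.1 : ℝ), z.2]) ++ [c]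

section GridBlock
variable {r : ℕ} {c : ℝ²}

theorem length_gridBlock : (gridBlock r c).length = (2 * r + 1) ^ 2 + 2 := by
  have : ((r : ℤ) + 1 + r).toNat = 2 * r + 1 := by omega
  simp only [gridBlock, List.cons_append, List.length_cons, List.length_append, List.length_map,
    Finset.length_toList, Finset.card_product, Int.card_Icc, sub_neg_eq_add, this, List.length_nil]
  ring

theorem head?_gridBlock : (gridBlock r c).head? = some c := rfl

theorem getLast?_gridBlock : (gridBlock r c).getLast? = some c := by
  rw [gridBlock, List.getLast?_concat]

theorem dist_le_of_mem_gridBlock {x : ℝ²} (hx : x ∈ gridBlock r c) : dist x c ≤ 2 * r := by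
  simp only [gridBlock, List.cons_append, List.mem_cons, List.mem_append, List.mem_map,
    Finset.mem_toList, Finset.mem_product, Finset.mem_Icc, List.not_mem_nil, or_false] at hx
  rcases hx with rfl | ⟨⟨a, b⟩, ⟨⟨ha, ha'⟩, hb, hb'⟩, rfl⟩ | rfl
  · simp
  · rw [dist_eq_norm, add_sub_cancel_left, EuclideanSpace.norm_eq, Fin.sum_univ_two,
      Real.sqrt_le_left (by positivity)]
    have ha : -(r : ℝ) ≤ a ∧ (a : ℝ) ≤ r := ⟨by exact_mod_cast ha, by exact_mod_cast ha'⟩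
    have hb : -(r : ℝ) ≤ b ∧ (b : ℝ) ≤ r := ⟨by exact_mod_cast hb, by exact_mod_cast hb'⟩
    simp only [Matrix.cons_val_zero, Matrix.cons_val_one, Matrix.cons_val_fin_one,
      Real.norm_eq_abs, sq_abs]
    nlinarith
  · simp

theorem isChain_gridBlock : (gridBlock r c).IsChain fun a b => dist a b ≤ 4 * r := by
  refine List.isChain_iff_getElem.mpr fun i hi => ?_
  have := dist_le_of_mem_gridBlock (List.getElem_mem (Nat.lt_of_succ_lt hi))
  have := dist_le_of_mem_gridBlock (List.getElem_mem hi)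
  linarith [dist_triangle_right (gridBlock r c)[i] (gridBlock r c)[i + 1] c]

theorem mem_gridPoints_of_mem_gridBlock {p₀ x : ℝ²} (hc : c ∈ gridPoints p₀)
    (hx : x ∈ gridBlock r c) : x ∈ gridPoints p₀ := by
  simp only [gridBlock, List.cons_append, List.mem_cons, List.mem_append, List.mem_map,
    Finset.mem_toList, List.not_mem_nil, or_false] at hx
  rcases hx with rfl | ⟨⟨a, b⟩, -, rfl⟩ | rfl
  · exact hc
  · intro j
    obtain ⟨n, hn⟩ := hc j
    obtain ⟨k, hk⟩ : ∃ k : ℤ, (!₂[(a : ℝ), b] : ℝ²) j = k := by fin_cases j <;> simp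
    exact ⟨n + k, by rw [PiLp.add_apply, hn, hk]; push_cast; ring⟩
  · exact hc

theorem mem_gridBlock_of_dist_le {p₀ n : ℝ²} (hn : n ∈ gridPoints p₀) (hc : c ∈ gridPoints p₀)
    (h : dist n c ≤ r) : n ∈ gridBlock r c := by
  have hcoord : ∀ j, ∃ a : ℤ, -(r : ℤ) ≤ a ∧ a ≤ r ∧ n j = c j + a := by
    intro j
    obtain ⟨k, hk⟩ := hn j
    obtain ⟨l, hl⟩ := hc j
    have hj : |n j - c j| ≤ r := by
      simpa [Real.dist_eq] using (PiLp.dist_apply_le n c j).trans h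
    rw [hk, hl, abs_le] at hj
    refine ⟨k - l, ?_, ?_, by rw [hk, hl]; push_cast; ring⟩
    · have : -(r : ℝ) ≤ (k - l : ℤ) := by push_cast; linarith
      exact_mod_cast this
    · have : ((k - l : ℤ) : ℝ) ≤ r := by push_cast; linarith
      exact_mod_cast this
  obtain ⟨a, ha, ha', ha0⟩ := hcoord 0
  obtain ⟨b, hb, hb', hb1⟩ := hcoord 1
  simp only [gridBlock, List.cons_append, List.mem_cons, List.mem_append, List.mem_map,
    Finset.mem_toList, Finset.mem_product, Finset.mem_Icc]
  refine Or.inr (Or.inl ⟨(a, b), ⟨⟨ha, ha'⟩, hb, hb'⟩, ?_⟩)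
  ext j
  fin_cases j <;> simp [ha0, hb1]

end GridBlock

theorem exists_gridPoints_tour_through_gridBlocks (p₀ : ℝ²) (r : ℕ) {cs : List ℝ²}
    (hgrid : ∀ c ∈ cs, c ∈ gridPoints p₀) (hchain : cs.IsChain fun a b => dist a b ≤ 4 * r)
    (hhead : cs.head? = some p₀) (hlast : cs.getLast? = some p₀) :
    ∃ (m' : ℕ) (q : ℕ → ℝ²), q m' = q 0 ∧ q 0 = p₀ ∧ (∀ i ≤ m', q i ∈ gridPoints p₀) ∧
      (∀ c ∈ cs, ∀ n ∈ gridPoints p₀, dist n c ≤ r → n ∈ tourTrace m' q) ∧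
      tourLength m' q ≤ 4 * r * ((2 * r + 1) ^ 2 + 2) * cs.length := by
  set l := cs.flatMap (gridBlock r)
  have hl : l.IsChain fun a b => dist a b ≤ 4 * r :=
    hchain.flatMap_of_head?_of_getLast? (fun _ => isChain_gridBlock) (fun _ => head?_gridBlock)
      fun _ => getLast?_gridBlock
  have hlhead : l.head? = some p₀ := List.head?_flatMap_of_head? hhead fun _ => head?_gridBlock
  have hllast : l.getLast? = some p₀ :=
    List.getLast?_flatMap_of_getLast? hlast fun _ => getLast?_gridBlock
  have hl0 : l.getD 0 p₀ = p₀ := by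
    rw [List.getD_eq_getElem?_getD, ← List.head?_eq_getElem?, hlhead, Option.getD_some]
  refine ⟨l.length - 1, (l.getD · p₀), l.getD_length_sub_one_eq_getD_zero _ hlhead hllast, hl0,
    fun i _ => ?_, fun c hc n hn hnc => mem_tourTrace_getD _ ?_, ?_⟩
  · show l.getD i p₀ ∈ gridPoints p₀
    rcases lt_or_ge i l.length with hi | hi
    · obtain ⟨c, hc, hic⟩ := List.mem_flatMap.mp (List.getElem_mem hi)
      rw [List.getD_eq_getElem _ _ hi]
      exact mem_gridPoints_of_mem_gridBlock (hgrid c hc) hic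
    · rw [List.getD_eq_default _ _ hi]
      exact self_mem_gridPoints p₀
  · exact List.mem_flatMap.mpr ⟨c, hc, mem_gridBlock_of_dist_le hn (hgrid c hc) hnc⟩
  · have hlen : l.length = ((2 * r + 1) ^ 2 + 2) * cs.length := by
      simp [l, List.length_flatMap, length_gridBlock, mul_comm]
    calc _ ≤ ((l.length - 1 : ℕ) : ℝ) * (4 * r) := tourLength_getD_le l p₀ hl
      _ ≤ (((2 * r + 1) ^ 2 + 2) * cs.length : ℕ) * (4 * r) := by
        gcongr
        exact (Nat.sub_le _ _).trans hlen.le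
      _ = _ := by push_cast; ring

theorem exists_gridPoints_isChain_near_tourTrace {m : ℕ} {p : ℕ → ℝ²} (hp : p m = p 0) :
    ∃ cs : List ℝ², (∀ c ∈ cs, c ∈ gridPoints (p 0)) ∧ cs.IsChain (fun a b => dist a b ≤ 4) ∧
      cs.head? = some (p 0) ∧ cs.getLast? = some (p 0) ∧
      (∀ x ∈ tourTrace m p, ∃ c ∈ cs, dist x c ≤ 3) ∧ (cs.length : ℝ) ≤ tourLength m p + 2 := by
  obtain ⟨N, f, hf0, hfN, hstep, hlenf, htrace⟩ := exists_refinement_dist_le_one m p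
  obtain ⟨c, cs, hchain, hgrid, hlast, hcover, hcN, hlen⟩ :=
    exists_isChain_net_along (exists_mem_gridPoints_dist_le_one (p 0)) f
      (hf0 ▸ self_mem_gridPoints (p 0)) N hstep
  rw [hfN, hp] at hcN hlen
  rw [← tourLength_eq_sum_dist, hlenf] at hlen
  rw [hf0] at hlast
  refine ⟨p 0 :: c :: cs, List.forall_mem_cons.mpr ⟨self_mem_gridPoints _, hgrid⟩,
    (hchain.imp fun _ _ h => by linarith).cons ?_, rfl, by simpa using hlast, fun x hx => ?_, ?_⟩
  · rintro _ ⟨⟩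
    linarith
  · obtain ⟨t, ht, hxt⟩ := exists_dist_le_of_mem_tourTrace zero_le_one hstep (htrace hx)
    obtain ⟨c', hc', htc'⟩ := hcover t ht
    exact ⟨c', List.mem_cons_of_mem _ hc', by linarith [dist_triangle x (f t) c']⟩
  · simp only [List.length_cons, Nat.cast_add, Nat.cast_one]
    linarith [dist_nonneg (x := p 0) (y := c)]

theorem grid_discretization_square :
    ∃ K : ℝ, 0 < K ∧
      ∀ (m : ℕ) (p : ℕ → EuclideanSpace ℝ (Fin 2)), p m = p 0 →
        1 ≤ tourLength m p →
        ∃ (m' : ℕ) (q : ℕ → EuclideanSpace ℝ (Fin 2)),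
          q m' = q 0 ∧
          q 0 = p 0 ∧
          (∀ i ≤ m', ∀ j : Fin 2, ∃ n : ℤ, q i j = p 0 j + n) ∧
          squareCoverage m p ⊆ squareCoverage m' q ∧
          tourLength m' q ≤ K * tourLength m p := by
  refine ⟨7380, by norm_num, fun m p hp hL => ?_⟩
  obtain ⟨cs, hgrid, hchain, hhead, hlast, hnear, hlen⟩ :=
    exists_gridPoints_isChain_near_tourTrace hp
  obtain ⟨m', q, hq, hq0, hqgrid, hqtrace, hqlen⟩ := exists_gridPoints_tour_through_gridBlocks
    (p 0) 5 hgrid (hchain.imp fun _ _ h => by norm_num; linarith) hhead hlast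
  refine ⟨m', q, hq, hq0, hqgrid,
    squareCoverage_subset_of_forall_gridPoints (p 0) fun x hx n hn hxn => ?_, ?_⟩
  · obtain ⟨c, hc, hxc⟩ := hnear x hx
    exact hqtrace c hc n hn (by push_cast; linarith [dist_triangle_left n c x])
  · norm_num at hqlen
    linarith
end
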